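/- arXiv:1105.5187 — 5 statements merged into one kernel-verified Lean document; each statement's English description precedes it below -/
import Mathlib

section
/- Let R be a ring, M an R-bimodule, and σ : R⁴ → M a function satisfying the normalization σ(x,y,0,0) = σ(0,0,z,t) = σ(x,0,z,0) = σ(0,y,0,t) = σ(x,0,0,t) = 0 and the Mac Lane condition (M8): −σ(r,s,u,v) − σ(x,y,z,t) + σ(r+x,s+y,u+z,v+t) + σ(r,s,x,y) + σ(u,v,z,t) − σ(r+u,s+v,x+z,y+t) − σ(r,u,x,z) − σ(s,v,y,t) + σ(r+s,u+v,x+y,z+t) = 0 for all arguments. Define η(x,y) = σ(0,x,y,0). Then η(x,y) + η(y,x) = 0 for all x,y ∈ R. -/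
theorem stmt4_general {R M : Type*} [Ring R] [AddCommGroup M]
    (σ : R → R → R → R → M)
    (hn1 : ∀ x y, σ x y 0 0 = 0) (hn2 : ∀ z t, σ 0 0 z t = 0)
    (hn5 : ∀ x t, σ x 0 0 t = 0)
    (hM8 : ∀ r s u v x y z t : R,
      -σ r s u v - σ x y z t + σ (r + x) (s + y) (u + z) (v + t)
        + σ r s x y + σ u v z t - σ (r + u) (s + v) (x + z) (y + t)
        - σ r u x z - σ s v y t + σ (r + s) (u + v) (x + y) (z + t) = 0)
    (η : R → R → M) (hη : ∀ x y, η x y = σ 0 x y 0) :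
    ∀ x y : R, η x y + η y x = 0 := by
  intro x y
  have h := hM8 0 0 y 0 0 x 0 0
  simp only [add_zero, zero_add, hn1, hn2, hn5, neg_zero, sub_zero] at h
  rwa [hη, hη]

theorem stmt4 {R M : Type*} [Ring R] [AddCommGroup M]
    (σ : R → R → R → R → M)
    (hn1 : ∀ x y, σ x y 0 0 = 0) (hn2 : ∀ z t, σ 0 0 z t = 0)
    (hn3 : ∀ x z, σ x 0 z 0 = 0) (hn4 : ∀ y t, σ 0 y 0 t = 0) (hn5 : ∀ x t, σ x 0 0 t = 0)
    (hM8 : ∀ r s u v x y z t : R,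
      -σ r s u v - σ x y z t + σ (r + x) (s + y) (u + z) (v + t)
        + σ r s x y + σ u v z t - σ (r + u) (s + v) (x + z) (y + t)
        - σ r u x z - σ s v y t + σ (r + s) (u + v) (x + y) (z + t) = 0)
    (η : R → R → M) (hη : ∀ x y, η x y = σ 0 x y 0) :
    ∀ x y : R, η x y + η y x = 0 :=
  stmt4_general σ hn1 hn2 hn5 hM8 η hη
end

section
/- Let R be a ring, M an abelian group, and σ : R⁴ → M a function satisfying the normalization σ(x,y,0,0) = σ(0,0,z,t) = σ(x,0,z,0) = σ(0,y,0,t) = σ(x,0,0,t) = 0 and condition (M8) (as in Mac Lane cohomology) for all arguments. Define ξ(x,y,z) = −σ(x,y,0,z) and η(x,y) = σ(0,x,y,0). Then (A2) holds: ξ(x,y,z) − ξ(x,z,y) + ξ(z,x,y) + η(x+y,z) − η(x,z) − η(y,z) = 0 for all x,y,z ∈ R. -/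
/-!
Both specializations of (M8) used below express `σ x y z 0` through `ξ` and `η`:
one through `ξ x z y - ξ x y z + η y z`, the other through `ξ z x y - η x z + η (x + y) z`.
Equating the two expressions is (A2).
-/

section

variable {R M : Type*} [AddZeroClass R] [AddCommGroup M]

def SatisfiesM8 (σ : R → R → R → R → M) : Prop :=
  ∀ r s u v x y z t : R,
    -σ r s u v - σ x y z t + σ (r + x) (s + y) (u + z) (v + t)
      + σ r s x y + σ u v z t - σ (r + u) (s + v) (x + z) (y + t)
      - σ r u x z - σ s v y t + σ (r + s) (u + v) (x + y) (z + t) = 0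

/-- The specialization `s = u = x = z = t = 0` of (M8). -/
theorem SatisfiesM8.sigma_eq_swap {σ : R → R → R → R → M} (hM8 : SatisfiesM8 σ)
    (hn1 : ∀ x y, σ x y 0 0 = 0) (hn5 : ∀ x t, σ x 0 0 t = 0) (x y z : R) :
    σ x y z 0 = σ x y 0 z - σ x z 0 y + σ 0 y z 0 := by
  have h := hM8 x 0 0 y 0 z 0 0
  simp only [add_zero, zero_add, hn1, hn5] at h
  rw [← sub_eq_zero, ← h]
  abel

/-- The specialization `r = u = y = z = t = 0` of (M8). -/
theorem SatisfiesM8.sigma_eq_add {σ : R → R → R → R → M} (hM8 : SatisfiesM8 σ)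
    (hn1 : ∀ x y, σ x y 0 0 = 0) (hn2 : ∀ z t, σ 0 0 z t = 0) (hn4 : ∀ y t, σ 0 y 0 t = 0)
    (x y z : R) :
    σ x y z 0 = σ 0 (x + y) z 0 - σ 0 x z 0 - σ z x 0 y := by
  have h := hM8 0 x 0 y z 0 0 0
  simp only [add_zero, zero_add, hn1, hn2, hn4] at h
  rw [← sub_eq_zero, ← h]
  abel

end

theorem stmt5_general {R M : Type*} [Ring R] [AddCommGroup M]
    (σ : R → R → R → R → M)
    (hn1 : ∀ x y, σ x y 0 0 = 0) (hn2 : ∀ z t, σ 0 0 z t = 0)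
    (hn4 : ∀ y t, σ 0 y 0 t = 0) (hn5 : ∀ x t, σ x 0 0 t = 0)
    (hM8 : ∀ r s u v x y z t : R,
      -σ r s u v - σ x y z t + σ (r + x) (s + y) (u + z) (v + t)
        + σ r s x y + σ u v z t - σ (r + u) (s + v) (x + z) (y + t)
        - σ r u x z - σ s v y t + σ (r + s) (u + v) (x + y) (z + t) = 0)
    (ξ : R → R → R → M) (hξ : ∀ x y z, ξ x y z = -σ x y 0 z)
    (η : R → R → M) (hη : ∀ x y, η x y = σ 0 x y 0) :
    ∀ x y z : R,
      ξ x y z - ξ x z y + ξ z x y + η (x + y) z - η x z - η y z = 0 := by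
  intro x y z
  have hswap := SatisfiesM8.sigma_eq_swap hM8 hn1 hn5 x y z
  have hadd := SatisfiesM8.sigma_eq_add hM8 hn1 hn2 hn4 x y z
  simp only [hξ, hη]
  linear_combination (norm := abel) hadd.symm.trans hswap

theorem stmt5 {R M : Type*} [Ring R] [AddCommGroup M]
    (σ : R → R → R → R → M)
    (hn1 : ∀ x y, σ x y 0 0 = 0) (hn2 : ∀ z t, σ 0 0 z t = 0)
    (hn3 : ∀ x z, σ x 0 z 0 = 0) (hn4 : ∀ y t, σ 0 y 0 t = 0) (hn5 : ∀ x t, σ x 0 0 t = 0)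
    (hM8 : ∀ r s u v x y z t : R,
      -σ r s u v - σ x y z t + σ (r + x) (s + y) (u + z) (v + t)
        + σ r s x y + σ u v z t - σ (r + u) (s + v) (x + z) (y + t)
        - σ r u x z - σ s v y t + σ (r + s) (u + v) (x + y) (z + t) = 0)
    (ξ : R → R → R → M) (hξ : ∀ x y z, ξ x y z = -σ x y 0 z)
    (η : R → R → M) (hη : ∀ x y, η x y = σ 0 x y 0) :
    ∀ x y z : R,
      ξ x y z - ξ x z y + ξ z x y + η (x + y) z - η x z - η y z = 0 :=
  stmt5_general σ hn1 hn2 hn4 hn5 hM8 ξ hξ η hη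
end

section
/- Let R be a ring, M an abelian group, and σ : R⁴ → M normalized (σ(x,y,0,0) = σ(0,0,z,t) = σ(x,0,z,0) = σ(0,y,0,t) = σ(x,0,0,t) = 0) and satisfying (M8) for all arguments. Define ξ(x,y,z) = −σ(x,y,0,z) and η(x,y) = σ(0,x,y,0). Then (A1) holds: ξ(y,z,t) − ξ(x+y,z,t) + ξ(x,y+z,t) − ξ(x,y,z+t) + ξ(x,y,z) = 0 for all x,y,z,t ∈ R. -/
theorem stmt6_general {R M : Type*} [Ring R] [AddCommGroup M]
    (σ : R → R → R → R → M)
    (hn1 : ∀ x y, σ x y 0 0 = 0) (hn2 : ∀ z t, σ 0 0 z t = 0)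
    (hn4 : ∀ y t, σ 0 y 0 t = 0)
    (hM8 : ∀ r s u v x y z t : R,
      -σ r s u v - σ x y z t + σ (r + x) (s + y) (u + z) (v + t)
        + σ r s x y + σ u v z t - σ (r + u) (s + v) (x + z) (y + t)
        - σ r u x z - σ s v y t + σ (r + s) (u + v) (x + y) (z + t) = 0)
    (ξ : R → R → R → M) (hξ : ∀ x y z, ξ x y z = -σ x y 0 z) :
    ∀ x y z t : R,
      ξ y z t - ξ (x + y) z t + ξ x (y + z) t - ξ x y (z + t) + ξ x y z = 0 := by
  intro x y z t
  -- (M8) with (r, s, v, t) := (x, y, z, t) and u = x = y = z = 0; normalization kills four terms.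
  have hspec := hM8 x y 0 z 0 0 0 t
  simp only [add_zero, zero_add, hn1, hn2, hn4] at hspec
  simp only [hξ]
  rw [← hspec]
  abel

theorem stmt6 {R M : Type*} [Ring R] [AddCommGroup M]
    (σ : R → R → R → R → M)
    (hn1 : ∀ x y, σ x y 0 0 = 0) (hn2 : ∀ z t, σ 0 0 z t = 0)
    (hn3 : ∀ x z, σ x 0 z 0 = 0) (hn4 : ∀ y t, σ 0 y 0 t = 0) (hn5 : ∀ x t, σ x 0 0 t = 0)
    (hM8 : ∀ r s u v x y z t : R,
      -σ r s u v - σ x y z t + σ (r + x) (s + y) (u + z) (v + t)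
        + σ r s x y + σ u v z t - σ (r + u) (s + v) (x + z) (y + t)
        - σ r u x z - σ s v y t + σ (r + s) (u + v) (x + y) (z + t) = 0)
    (ξ : R → R → R → M) (hξ : ∀ x y z, ξ x y z = -σ x y 0 z)
    (η : R → R → M) (hη : ∀ x y, η x y = σ 0 x y 0) :
    ∀ x y z t : R,
      ξ y z t - ξ (x + y) z t + ξ x (y + z) t - ξ x y (z + t) + ξ x y z = 0 :=
  stmt6_general σ hn1 hn2 hn4 hM8 ξ hξ
end

section
/- Let R be a ring, M an abelian group, and σ : R⁴ → M normalized (σ(x,y,0,0) = σ(0,0,z,t) = σ(x,0,z,0) = σ(0,y,0,t) = σ(x,0,0,t) = 0) satisfying (M8) for all arguments. Define ξ(x,y,z) = −σ(x,y,0,z) and η(x,y) = σ(0,x,y,0). Then σ is recovered by the formula σ(r,s,u,t) = ξ(r+s,u,t) − ξ(r,s,u) + η(s,u) + ξ(r,u,s) − ξ(r+u,s,t) for all r,s,u,t ∈ R. -/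
/-!
Specialising (M8) at `v = x = y = z = 0` expresses `σ r s u t` through `σ r s u 0` and two
values with vanishing third argument; specialising it at `s = u = x = z = t = 0` (renaming
`v, y` to `s, u`) expresses `σ r s u 0` through `σ 0 s u 0` and values with vanishing third
argument. The normalisation conditions kill all remaining terms.
-/

/-- The Mac Lane 3-cocycle condition (M8). -/
def IsMacLaneCocycle {R M : Type*} [Add R] [AddCommGroup M] (σ : R → R → R → R → M) : Prop :=
  ∀ r s u v x y z t : R,
    -σ r s u v - σ x y z t + σ (r + x) (s + y) (u + z) (v + t)
      + σ r s x y + σ u v z t - σ (r + u) (s + v) (x + z) (y + t)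
      - σ r u x z - σ s v y t + σ (r + s) (u + v) (x + y) (z + t) = 0

namespace IsMacLaneCocycle

variable {R M : Type*} [AddZeroClass R] [AddCommGroup M] {σ : R → R → R → R → M}

theorem expand_fourth (hσ : IsMacLaneCocycle σ)
    (hn1 : ∀ x y, σ x y 0 0 = 0) (hn2 : ∀ z t, σ 0 0 z t = 0) (hn5 : ∀ x t, σ x 0 0 t = 0)
    (r s u t : R) :
    σ r s u t = σ r s u 0 + σ (r + u) s 0 t - σ (r + s) u 0 t := by
  have h := hσ r s u 0 0 0 0 t
  simp only [add_zero, zero_add, hn1, hn2, hn5] at h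
  linear_combination (norm := abel1) h

theorem expand_third (hσ : IsMacLaneCocycle σ)
    (hn1 : ∀ x y, σ x y 0 0 = 0) (hn5 : ∀ x t, σ x 0 0 t = 0) (r s u : R) :
    σ r s u 0 = σ r s 0 u + σ 0 s u 0 - σ r u 0 s := by
  have h := hσ r 0 0 s 0 u 0 0
  simp only [add_zero, zero_add, hn1, hn5] at h
  linear_combination (norm := abel1) h

end IsMacLaneCocycle

theorem stmt7_general {R M : Type*} [Ring R] [AddCommGroup M]
    (σ : R → R → R → R → M)
    (hn1 : ∀ x y, σ x y 0 0 = 0) (hn2 : ∀ z t, σ 0 0 z t = 0)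
    (hn5 : ∀ x t, σ x 0 0 t = 0)
    (hM8 : ∀ r s u v x y z t : R,
      -σ r s u v - σ x y z t + σ (r + x) (s + y) (u + z) (v + t)
        + σ r s x y + σ u v z t - σ (r + u) (s + v) (x + z) (y + t)
        - σ r u x z - σ s v y t + σ (r + s) (u + v) (x + y) (z + t) = 0)
    (ξ : R → R → R → M) (hξ : ∀ x y z, ξ x y z = -σ x y 0 z)
    (η : R → R → M) (hη : ∀ x y, η x y = σ 0 x y 0) :
    ∀ r s u t : R,
      σ r s u t = ξ (r + s) u t - ξ r s u + η s u + ξ r u s - ξ (r + u) s t := by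
  intro r s u t
  have hσ : IsMacLaneCocycle σ := hM8
  rw [hσ.expand_fourth hn1 hn2 hn5, hσ.expand_third hn1 hn5, hξ, hξ, hξ, hξ, hη]
  abel

theorem stmt7 {R M : Type*} [Ring R] [AddCommGroup M]
    (σ : R → R → R → R → M)
    (hn1 : ∀ x y, σ x y 0 0 = 0) (hn2 : ∀ z t, σ 0 0 z t = 0)
    (hn3 : ∀ x z, σ x 0 z 0 = 0) (hn4 : ∀ y t, σ 0 y 0 t = 0) (hn5 : ∀ x t, σ x 0 0 t = 0)
    (hM8 : ∀ r s u v x y z t : R,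
      -σ r s u v - σ x y z t + σ (r + x) (s + y) (u + z) (v + t)
        + σ r s x y + σ u v z t - σ (r + u) (s + v) (x + z) (y + t)
        - σ r u x z - σ s v y t + σ (r + s) (u + v) (x + y) (z + t) = 0)
    (ξ : R → R → R → M) (hξ : ∀ x y z, ξ x y z = -σ x y 0 z)
    (η : R → R → M) (hη : ∀ x y, η x y = σ 0 x y 0) :
    ∀ r s u t : R,
      σ r s u t = ξ (r + s) u t - ξ r s u + η s u + ξ r u s - ξ (r + u) s t :=
  stmt7_general σ hn1 hn2 hn5 hM8 ξ hξ η hη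
end

section
/- Let R be a ring, M an R-bimodule, and ρ : R³ → M a function with normalization ρ(0,y,z) = ρ(x,0,z) = ρ(x,y,0) = 0 satisfying (M7): −ρ(x,y,r) − ρ(z,t,r) + ρ(x+z,y+t,r) + ρ(x,z,r) + ρ(y,t,r) − ρ(x+y,z+t,r) − σ(xr,yr,zr,tr) + σ(x,y,z,t)·r = 0 for all arguments, where σ : R⁴ → M. Define η(x,y) = σ(0,x,y,0). Then (A5) holds: η(x,y)·r − η(xr,yr) = ρ(x,y,r) − ρ(y,x,r) for all x,y,r ∈ R. -/
theorem stmt9_general {R M : Type*} [Ring R] [AddCommGroup M] [Module Rᵐᵒᵖ M]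
    (ρ : R → R → R → M) (σ : R → R → R → R → M)
    (hr1 : ∀ y z, ρ 0 y z = 0) (hr2 : ∀ x z, ρ x 0 z = 0)
    (hM7 : ∀ x y z t r : R,
      -ρ x y r - ρ z t r + ρ (x + z) (y + t) r + ρ x z r + ρ y t r
        - ρ (x + y) (z + t) r - σ (x * r) (y * r) (z * r) (t * r)
        + MulOpposite.op r • σ x y z t = 0)
    (η : R → R → M) (hη : ∀ x y, η x y = σ 0 x y 0) :
    ∀ x y r : R,
      MulOpposite.op r • η x y - η (x * r) (y * r) = ρ x y r - ρ y x r := by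
  intro x y r
  have hM7_at := hM7 0 x y 0 r
  simp only [zero_mul, zero_add, add_zero, hr1, hr2] at hM7_at
  rw [hη, hη]
  linear_combination (norm := abel) hM7_at

theorem stmt9 {R M : Type*} [Ring R] [AddCommGroup M] [Module Rᵐᵒᵖ M]
    (ρ : R → R → R → M) (σ : R → R → R → R → M)
    (hr1 : ∀ y z, ρ 0 y z = 0) (hr2 : ∀ x z, ρ x 0 z = 0) (hr3 : ∀ x y, ρ x y 0 = 0)
    (hM7 : ∀ x y z t r : R,
      -ρ x y r - ρ z t r + ρ (x + z) (y + t) r + ρ x z r + ρ y t r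
        - ρ (x + y) (z + t) r - σ (x * r) (y * r) (z * r) (t * r)
        + MulOpposite.op r • σ x y z t = 0)
    (η : R → R → M) (hη : ∀ x y, η x y = σ 0 x y 0) :
    ∀ x y r : R,
      MulOpposite.op r • η x y - η (x * r) (y * r) = ρ x y r - ρ y x r :=
  stmt9_general ρ σ hr1 hr2 hM7 η hη
end
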